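/- arXiv:2011.13780 — 3 statements merged into one kernel-verified Lean document; each statement's English description precedes it below -/
import Mathlib

section
/- Let f ∈ C_c^∞(ℝ^d), P_n f(x) = f(x/√n), and ℒ the simple random walk operator on ℤ^d. Then ‖n(ℒ−I)P_n f‖_∞ ≤ ‖Δf‖_∞ + (d/(6√n)) · max_{1≤i≤d} ‖∂³f/∂x_i³‖_∞. -/
open Set

noncomputable def rwEmbed (d n : ℕ) (x : Fin d → ℤ) : Fin d → ℝ :=
  fun j => (x j : ℝ) / Real.sqrt n

section Aux

variable {E : Type*} [NormedAddCommGroup E] [NormedSpace ℝ E]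

lemma aux_iteratedFDerivWithin_eq (g : E → ℝ) (hg : ContDiff ℝ (⊤ : ℕ∞) g) {s : Set E}
    (hs : UniqueDiffOn ℝ s) {x : E} (hx : x ∈ s) (k : ℕ) :
    iteratedFDerivWithin ℝ k g s x = iteratedFDeriv ℝ k g x := by
  have h := (contDiff_iff_ftaylorSeries.mp hg).hasFTaylorSeriesUpToOn s
  exact (h.eq_iteratedFDerivWithin_of_uniqueDiffOn (by norm_cast; exact le_top) hs hx).symm

lemma aux_iteratedDerivWithin_eq (g : ℝ → ℝ) (hg : ContDiff ℝ (⊤ : ℕ∞) g) {s : Set ℝ}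
    (hs : UniqueDiffOn ℝ s) {x : ℝ} (hx : x ∈ s) (k : ℕ) :
    iteratedDerivWithin k g s x = iteratedDeriv k g x := by
  rw [iteratedDerivWithin_eq_iteratedFDerivWithin, iteratedDeriv_eq_iteratedFDeriv,
    aux_iteratedFDerivWithin_eq g hg hs hx]

lemma line_hasDerivAt (f : E → ℝ) (hf : ContDiff ℝ (⊤ : ℕ∞) f) (y v : E) (k : ℕ) (t : ℝ) :
    HasDerivAt (fun s : ℝ => iteratedFDeriv ℝ k f (y + s • v) (fun _ => v))
      (iteratedFDeriv ℝ (k + 1) f (y + t • v) (fun _ => v)) t := by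
  have hF : Differentiable ℝ (iteratedFDeriv ℝ k f) :=
    (hf.iteratedFDeriv_right (m := 1) (n := (⊤ : ℕ∞)) (by norm_cast; exact le_top)).differentiable one_ne_zero
  have hc : HasDerivAt (fun s : ℝ => y + s • v) v t := by
    simpa using ((hasDerivAt_id t).smul_const v).const_add y
  have hD : HasDerivAt (fun s : ℝ => iteratedFDeriv ℝ k f (y + s • v))
      (fderiv ℝ (iteratedFDeriv ℝ k f) (y + t • v) v) t :=
    (hF (y + t • v)).hasFDerivAt.comp_hasDerivAt t hc
  have happ := (ContinuousMultilinearMap.apply ℝ (fun _ : Fin k => E) ℝ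
      (fun _ => v)).hasFDerivAt.comp_hasDerivAt t hD
  have heq : iteratedFDeriv ℝ (k + 1) f (y + t • v) (fun _ => v)
      = (fderiv ℝ (iteratedFDeriv ℝ k f) (y + t • v)) v (fun _ => v) := by
    rw [iteratedFDeriv_succ_apply_left]; rfl
  rw [heq]
  exact happ

lemma line_iteratedDeriv (f : E → ℝ) (hf : ContDiff ℝ (⊤ : ℕ∞) f) (y v : E) (k : ℕ) (t : ℝ) :
    iteratedDeriv k (fun s : ℝ => f (y + s • v)) t
      = iteratedFDeriv ℝ k f (y + t • v) (fun _ => v) := by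
  induction k generalizing t with
  | zero => simp
  | succ k ih =>
    rw [iteratedDeriv_succ]
    have hfun : iteratedDeriv k (fun s : ℝ => f (y + s • v))
        = fun s => iteratedFDeriv ℝ k f (y + s • v) (fun _ => v) := funext fun s => ih s
    rw [hfun]
    exact (line_hasDerivAt f hf y v k t).deriv

lemma line_contDiff (f : E → ℝ) (hf : ContDiff ℝ (⊤ : ℕ∞) f) (y v : E) :
    ContDiff ℝ (⊤ : ℕ∞) (fun s : ℝ => f (y + s • v)) :=
  hf.comp (contDiff_const.add (contDiff_id.smul contDiff_const))

lemma taylor3_bound (g : ℝ → ℝ) (hg : ContDiff ℝ (⊤ : ℕ∞) g) {C h : ℝ} (hh : 0 < h)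
    (hC : ∀ t, |iteratedDeriv 3 g t| ≤ C) :
    |g h - g 0 - h * iteratedDeriv 1 g 0 - h ^ 2 / 2 * iteratedDeriv 2 g 0| ≤ C * h ^ 3 / 6 := by
  have hs : UniqueDiffOn ℝ (Icc (0 : ℝ) h) := uniqueDiffOn_Icc hh
  have hmem : (0 : ℝ) ∈ Icc (0 : ℝ) h := ⟨le_refl 0, hh.le⟩
  have hcd : ContDiffOn ℝ 2 g (Icc 0 h) := (hg.of_le (by norm_cast)).contDiffOn
  have hF : Differentiable ℝ (iteratedFDeriv ℝ 2 g) :=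
    (hg.iteratedFDeriv_right (m := 1) (n := (⊤ : ℕ∞)) (by norm_cast)).differentiable one_ne_zero
  have h2 : Differentiable ℝ (iteratedDeriv 2 g) := by
    have := (ContinuousMultilinearMap.apply ℝ (fun _ : Fin 2 => ℝ) ℝ
      (fun _ => (1 : ℝ))).differentiable.comp hF
    have heq : iteratedDeriv 2 g = fun x => (ContinuousMultilinearMap.apply ℝ
        (fun _ : Fin 2 => ℝ) ℝ (fun _ => (1 : ℝ))) (iteratedFDeriv ℝ 2 g x) :=
      funext fun x => iteratedDeriv_eq_iteratedFDeriv
    rw [heq]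
    exact this
  have hdiff : DifferentiableOn ℝ (iteratedDerivWithin 2 g (Icc 0 h)) (Ioo 0 h) := by
    refine (h2.differentiableOn).congr fun x hx => ?_
    exact aux_iteratedDerivWithin_eq g hg hs (Ioo_subset_Icc_self hx) 2
  obtain ⟨x', hx', heq⟩ := taylor_mean_remainder_lagrange (n := 2) hh.ne
    (by rw [uIcc_of_le hh.le]; exact hcd) (by rw [uIcc_of_le hh.le, uIoo_of_le hh.le]; exact hdiff)
  rw [uIcc_of_le hh.le] at heq
  rw [uIoo_of_le hh.le] at hx'
  have hT : taylorWithinEval g 2 (Icc 0 h) 0 h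
      = g 0 + h * iteratedDeriv 1 g 0 + h ^ 2 / 2 * iteratedDeriv 2 g 0 := by
    rw [taylor_within_apply]
    rw [Finset.sum_range_succ, Finset.sum_range_succ, Finset.sum_range_one]
    rw [aux_iteratedDerivWithin_eq g hg hs hmem 0, aux_iteratedDerivWithin_eq g hg hs hmem 1,
        aux_iteratedDerivWithin_eq g hg hs hmem 2, iteratedDeriv_zero]
    simp only [smul_eq_mul, pow_zero, pow_one, sub_zero, Nat.factorial_zero, Nat.factorial_one,
      Nat.factorial_two, Nat.cast_one, Nat.cast_ofNat]
    ring
  have h3 : iteratedDerivWithin 3 g (Icc 0 h) x' = iteratedDeriv 3 g x' :=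
    aux_iteratedDerivWithin_eq g hg hs (Ioo_subset_Icc_self hx') 3
  have hkey : g h - g 0 - h * iteratedDeriv 1 g 0 - h ^ 2 / 2 * iteratedDeriv 2 g 0
      = iteratedDeriv 3 g x' * h ^ 3 / 6 := by
    have h2' := heq
    rw [hT] at h2'
    norm_num [Nat.factorial] at h2'
    rw [h3] at h2'
    rw [show iteratedDeriv 1 g = deriv g from iteratedDeriv_one]
    linarith [h2']
  rw [hkey]
  rw [abs_div, abs_mul]
  have h61 : |(6 : ℝ)| = 6 := by norm_num
  rw [h61, abs_pow, abs_of_pos hh]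
  have : |iteratedDeriv 3 g x'| * h ^ 3 ≤ C * h ^ 3 :=
    mul_le_mul_of_nonneg_right (hC x') (by positivity)
  exact div_le_div_of_nonneg_right this (by norm_num) |>.trans_eq rfl

lemma taylor3_symm (g : ℝ → ℝ) (hg : ContDiff ℝ (⊤ : ℕ∞) g) {C h : ℝ} (hh : 0 < h)
    (hC : ∀ t, |iteratedDeriv 3 g t| ≤ C) :
    |g h + g (-h) - 2 * g 0 - h ^ 2 * iteratedDeriv 2 g 0| ≤ C * h ^ 3 / 3 := by
  have h1 := taylor3_bound g hg hh hC
  have hg'c : ContDiff ℝ (⊤ : ℕ∞) (fun t : ℝ => g (-t)) := hg.comp contDiff_id.neg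
  have hC' : ∀ t, |iteratedDeriv 3 (fun t : ℝ => g (-t)) t| ≤ C := by
    intro t
    rw [iteratedDeriv_comp_neg]
    simpa [abs_mul, abs_pow] using hC (-t)
  have h2 := taylor3_bound (fun t : ℝ => g (-t)) hg'c hh hC'
  have e1 : iteratedDeriv 1 (fun t : ℝ => g (-t)) 0 = -iteratedDeriv 1 g 0 := by
    rw [iteratedDeriv_comp_neg]; simp
  have e2 : iteratedDeriv 2 (fun t : ℝ => g (-t)) 0 = iteratedDeriv 2 g 0 := by
    rw [iteratedDeriv_comp_neg]; simp
  rw [e1, e2] at h2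
  simp only [neg_zero] at h2
  have key : g h + g (-h) - 2 * g 0 - h ^ 2 * iteratedDeriv 2 g 0
      = (g h - g 0 - h * iteratedDeriv 1 g 0 - h ^ 2 / 2 * iteratedDeriv 2 g 0)
        + (g (-h) - g 0 - h * -iteratedDeriv 1 g 0 - h ^ 2 / 2 * iteratedDeriv 2 g 0) := by
    ring
  rw [key]
  calc |_ + _| ≤ _ := abs_add_le _ _
    _ ≤ C * h ^ 3 / 6 + C * h ^ 3 / 6 := add_le_add h1 h2
    _ = C * h ^ 3 / 3 := by ring

end Aux

theorem generator_sup_norm_bound (d n : ℕ) (hd : 0 < d) (hn : 0 < n)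
    (f : (Fin d → ℝ) → ℝ) (hf : ContDiff ℝ (⊤ : ℕ∞) f) (hsupp : HasCompactSupport f)
    (MΔ M3 : ℝ)
    -- MΔ is the sup norm of the Laplacian of f
    (hMΔ : ∀ y : Fin d → ℝ,
      |∑ i : Fin d, iteratedFDeriv ℝ 2 f y (fun _ => (Pi.single i 1 : Fin d → ℝ))| ≤ MΔ)
    -- M3 is the maximum over i of the sup norms of the third partial derivatives
    (hM3 : ∀ (i : Fin d) (y : Fin d → ℝ),
      |iteratedFDeriv ℝ 3 f y (fun _ => (Pi.single i 1 : Fin d → ℝ))| ≤ M3) :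
    ∀ x : Fin d → ℤ,
      |(n : ℝ) * ((1 / (2 * (d : ℝ))) *
          (∑ i : Fin d, (f (rwEmbed d n (x + Pi.single i 1)) + f (rwEmbed d n (x - Pi.single i 1))))
        - f (rwEmbed d n x))|
      ≤ MΔ + ((d : ℝ) / (6 * Real.sqrt n)) * M3 := by
  intro x
  have hfsm : ContDiff ℝ ((⊤ : ℕ∞) : WithTop ℕ∞) f := hf.of_le (by simp)
  have hd' : (0 : ℝ) < d := by exact_mod_cast hd
  have hd1 : (1 : ℝ) ≤ d := by exact_mod_cast hd
  have hs0 : (0 : ℝ) < Real.sqrt n := Real.sqrt_pos.mpr (by exact_mod_cast hn)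
  set h : ℝ := (Real.sqrt n)⁻¹ with hh_def
  have hh : 0 < h := inv_pos.mpr hs0
  have hsq : Real.sqrt n ^ 2 = (n : ℝ) := Real.sq_sqrt (Nat.cast_nonneg n)
  have hn' : (0 : ℝ) < n := by exact_mod_cast hn
  have hnh2 : (n : ℝ) * h ^ 2 = 1 := by
    have hp : h ^ 2 = ((n : ℝ))⁻¹ := by rw [hh_def, ← hsq]; simp
    rw [hp]
    field_simp
  have hnh3 : (n : ℝ) * h ^ 3 = h := by
    calc (n : ℝ) * h ^ 3 = ((n : ℝ) * h ^ 2) * h := by ring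
      _ = h := by rw [hnh2]; ring
  set y : Fin d → ℝ := rwEmbed d n x with hy
  set D2 : Fin d → ℝ := fun i => iteratedFDeriv ℝ 2 f y (fun _ => (Pi.single i 1 : Fin d → ℝ))
    with hD2
  -- embedding identities
  have embed_add : ∀ i : Fin d,
      rwEmbed d n (x + Pi.single i 1) = y + h • (Pi.single i 1 : Fin d → ℝ) := by
    intro i; funext j
    simp only [hy, rwEmbed, Pi.add_apply, Pi.smul_apply, smul_eq_mul, Pi.single_apply, hh_def]
    rcases eq_or_ne j i with rfl | hji
    · simp only [if_pos rfl]
      push_cast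
      rw [add_div]
      ring
    · simp only [if_neg hji]
      push_cast
      ring
  have embed_sub : ∀ i : Fin d,
      rwEmbed d n (x - Pi.single i 1) = y + (-h) • (Pi.single i 1 : Fin d → ℝ) := by
    intro i; funext j
    simp only [hy, rwEmbed, Pi.sub_apply, Pi.add_apply, Pi.smul_apply, smul_eq_mul,
      Pi.single_apply, hh_def]
    rcases eq_or_ne j i with rfl | hji
    · simp only [if_pos rfl]
      push_cast
      rw [sub_div]
      ring
    · simp only [if_neg hji]
      push_cast
      ring
  -- the per-direction Taylor bound
  have key : ∀ i : Fin d,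
      |f (rwEmbed d n (x + Pi.single i 1)) + f (rwEmbed d n (x - Pi.single i 1))
        - 2 * f y - h ^ 2 * D2 i| ≤ M3 * h ^ 3 / 3 := by
    intro i
    have hgc := line_contDiff f hfsm y (Pi.single i 1)
    have hC : ∀ t : ℝ,
        |iteratedDeriv 3 (fun s : ℝ => f (y + s • (Pi.single i 1 : Fin d → ℝ))) t| ≤ M3 := by
      intro t
      rw [line_iteratedDeriv f hfsm y _ 3 t]
      exact hM3 i _
    have hbd := taylor3_symm _ hgc hh hC
    have h0 : y + (0 : ℝ) • (Pi.single i 1 : Fin d → ℝ) = y := by simp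
    have hg2 : iteratedDeriv 2 (fun s : ℝ => f (y + s • (Pi.single i 1 : Fin d → ℝ))) 0
        = D2 i := by
      rw [line_iteratedDeriv f hfsm y _ 2 0, h0]
    simp only [hg2, h0] at hbd
    rw [embed_add i, embed_sub i]
    exact hbd
  -- algebraic identity
  have key2 : (n : ℝ) * ((1 / (2 * (d : ℝ))) *
        (∑ i : Fin d, (f (rwEmbed d n (x + Pi.single i 1)) + f (rwEmbed d n (x - Pi.single i 1))))
      - f y)
      = (1 / (2 * (d : ℝ))) * (∑ i : Fin d, (n : ℝ) *
          (f (rwEmbed d n (x + Pi.single i 1)) + f (rwEmbed d n (x - Pi.single i 1))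
            - 2 * f y - h ^ 2 * D2 i))
        + (1 / (2 * (d : ℝ))) * (∑ i : Fin d, D2 i) := by
    have hterm : ∀ i : Fin d, (n : ℝ) *
        (f (rwEmbed d n (x + Pi.single i 1)) + f (rwEmbed d n (x - Pi.single i 1))
          - 2 * f y - h ^ 2 * D2 i)
        = (n : ℝ) * (f (rwEmbed d n (x + Pi.single i 1)) + f (rwEmbed d n (x - Pi.single i 1)))
          - 2 * (n : ℝ) * f y - D2 i := by
      intro i
      calc (n : ℝ) * (f (rwEmbed d n (x + Pi.single i 1)) + f (rwEmbed d n (x - Pi.single i 1))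
            - 2 * f y - h ^ 2 * D2 i)
          = (n : ℝ) * (f (rwEmbed d n (x + Pi.single i 1)) + f (rwEmbed d n (x - Pi.single i 1)))
            - 2 * (n : ℝ) * f y - ((n : ℝ) * h ^ 2) * D2 i := by ring
        _ = _ := by rw [hnh2]; ring
    rw [Finset.sum_congr rfl fun i _ => hterm i]
    rw [Finset.sum_sub_distrib, Finset.sum_sub_distrib, ← Finset.mul_sum, Finset.sum_const,
      Finset.card_univ, Fintype.card_fin, nsmul_eq_mul]
    field_simp
    ring
  rw [key2]
  -- bounds
  have hM30 : 0 ≤ M3 := le_trans (abs_nonneg _) (hM3 ⟨0, hd⟩ y)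
  have hMΔ0 : 0 ≤ MΔ := le_trans (abs_nonneg _) (hMΔ y)
  have hSig : |∑ i : Fin d, (n : ℝ) *
      (f (rwEmbed d n (x + Pi.single i 1)) + f (rwEmbed d n (x - Pi.single i 1))
        - 2 * f y - h ^ 2 * D2 i)| ≤ (d : ℝ) * (M3 * h / 3) := by
    refine (Finset.abs_sum_le_sum_abs _ _).trans ?_
    have hterm : ∀ i : Fin d, |(n : ℝ) *
        (f (rwEmbed d n (x + Pi.single i 1)) + f (rwEmbed d n (x - Pi.single i 1))
          - 2 * f y - h ^ 2 * D2 i)| ≤ M3 * h / 3 := by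
      intro i
      rw [abs_mul, abs_of_nonneg (Nat.cast_nonneg n : (0 : ℝ) ≤ n)]
      calc (n : ℝ) * |f (rwEmbed d n (x + Pi.single i 1)) + f (rwEmbed d n (x - Pi.single i 1))
            - 2 * f y - h ^ 2 * D2 i|
          ≤ (n : ℝ) * (M3 * h ^ 3 / 3) :=
            mul_le_mul_of_nonneg_left (key i) (Nat.cast_nonneg n)
        _ = ((n : ℝ) * h ^ 3) * (M3 / 3) := by ring
        _ = M3 * h / 3 := by rw [hnh3]; ring
    refine (Finset.sum_le_sum fun i _ => hterm i).trans ?_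
    rw [Finset.sum_const, Finset.card_univ, Fintype.card_fin, nsmul_eq_mul]
  have hT : |∑ i : Fin d, D2 i| ≤ MΔ := hMΔ y
  have habs : |(1 : ℝ) / (2 * (d : ℝ))| = 1 / (2 * (d : ℝ)) := abs_of_nonneg (by positivity)
  calc |(1 / (2 * (d : ℝ))) * (∑ i : Fin d, (n : ℝ) *
          (f (rwEmbed d n (x + Pi.single i 1)) + f (rwEmbed d n (x - Pi.single i 1))
            - 2 * f y - h ^ 2 * D2 i))
        + (1 / (2 * (d : ℝ))) * (∑ i : Fin d, D2 i)|
      ≤ (1 / (2 * (d : ℝ))) * |∑ i : Fin d, (n : ℝ) *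
          (f (rwEmbed d n (x + Pi.single i 1)) + f (rwEmbed d n (x - Pi.single i 1))
            - 2 * f y - h ^ 2 * D2 i)|
        + (1 / (2 * (d : ℝ))) * |∑ i : Fin d, D2 i| := by
        refine (abs_add_le _ _).trans ?_
        rw [abs_mul, abs_mul, habs]
    _ ≤ (1 / (2 * (d : ℝ))) * ((d : ℝ) * (M3 * h / 3)) + (1 / (2 * (d : ℝ))) * MΔ := by
        gcongr
    _ ≤ MΔ + ((d : ℝ) / (6 * Real.sqrt n)) * M3 := by
        have e1 : (1 / (2 * (d : ℝ))) * ((d : ℝ) * (M3 * h / 3)) = M3 * h / 6 := by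
          field_simp
          ring
        have e2 : M3 * h / 6 ≤ ((d : ℝ) / (6 * Real.sqrt n)) * M3 := by
          have q1 : M3 * h / 6 = M3 / (6 * Real.sqrt n) := by
            rw [hh_def]
            field_simp
            try exact Or.inl (by ring)
          have q2 : ((d : ℝ) / (6 * Real.sqrt n)) * M3 = (d : ℝ) * (M3 / (6 * Real.sqrt n)) := by
            ring
          rw [q1, q2]
          exact le_mul_of_one_le_left (div_nonneg hM30 (by positivity)) hd1
        have e3 : (1 / (2 * (d : ℝ))) * MΔ ≤ MΔ := by
          have h1 : (1 : ℝ) / (2 * (d : ℝ)) ≤ 1 := by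
            rw [div_le_one (by positivity)]
            linarith
          calc (1 / (2 * (d : ℝ))) * MΔ ≤ 1 * MΔ := mul_le_mul_of_nonneg_right h1 hMΔ0
            _ = MΔ := one_mul _
        rw [e1]
        linarith
end

section
/- Let T be a bounded linear operator on a Banach space B with ‖T^j‖ ≤ M e^{ωj/n} for all j, and let k ∈ ℕ. Then for any f ∈ B, ‖e^{k(T−I)} f − T^k f‖ ≤ M e^{ω(k−1)/n} e^{k(e^{ω/n}−1)} √(k²(e^{ω/n}−1)² + k e^{ω/n}) · ‖(T−I) f‖. -/
open NormedSpace Finset Nat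

/-!
Writing `e^{k(T-I)} = e^{-k} ∑ k^j/j! • T^j` and using that the Poisson weights `e^{-k} k^j/j!`
sum to `1`, the difference `e^{k(T-I)} f - T^k f` is the Poisson average of `T^j f - T^k f`.
Telescoping, `T^j f - T^k f` is a sum of `|j - k|` terms `T^i (T-I) f`, each of norm at most
`M e^{ρ i} ‖(T-I) f‖` with `ρ = ω/n`. What remains is the scalar series
`∑ (k e^ρ)^j/j! |j - k|`, which Cauchy–Schwarz bounds by the square root of the second moment
`∑ (k e^ρ)^j/j! (j - k)^2 = ((k e^ρ - k)^2 + k e^ρ) e^{k e^ρ}` times `e^{k e^ρ}`.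
-/

theorem Real.hasSum_pow_div_factorial (x : ℝ) : HasSum (fun j : ℕ => x ^ j / j !) (Real.exp x) :=
  Real.exp_eq_exp_ℝ ▸ expSeries_div_hasSum_exp x

theorem hasSum_descFactorial_mul_pow_div_factorial (m : ℕ) (x : ℝ) :
    HasSum (fun j : ℕ => (j.descFactorial m : ℝ) * (x ^ j / j !)) (x ^ m * Real.exp x) := by
  rw [← hasSum_nat_add_iff' m, sum_eq_zero fun i hi => by
    rw [Nat.descFactorial_eq_zero_iff_lt.mpr (mem_range.mp hi), Nat.cast_zero, zero_mul], sub_zero]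
  refine ((Real.hasSum_pow_div_factorial x).mul_left (x ^ m)).congr_fun fun j => ?_
  have hfac := Nat.factorial_mul_descFactorial (Nat.le_add_left m j)
  rw [Nat.add_sub_cancel] at hfac
  rw [← hfac, Nat.cast_mul, pow_add]
  field_simp

theorem hasSum_sq_sub_mul_pow_div_factorial (x c : ℝ) :
    HasSum (fun j : ℕ => ((j : ℝ) - c) ^ 2 * (x ^ j / j !)) (((x - c) ^ 2 + x) * Real.exp x) := by
  convert (hasSum_descFactorial_mul_pow_div_factorial 2 x).add
    (((hasSum_descFactorial_mul_pow_div_factorial 1 x).mul_left (1 - 2 * c)).add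
      ((Real.hasSum_pow_div_factorial x).mul_left (c ^ 2))) using 1
  · funext j
    simp only [Nat.cast_descFactorial_two, Nat.descFactorial_one]
    ring
  · ring

theorem exists_hasSum_mul_abs_le_sqrt {ι : Type*} {w x : ι → ℝ} {W V : ℝ} (hw : ∀ i, 0 ≤ w i)
    (hW : HasSum w W) (hV : HasSum (fun i => w i * x i ^ 2) V) :
    ∃ C ≤ √(W * V), HasSum (fun i => w i * |x i|) C := by
  have hW0 : 0 ≤ W := hW.nonneg hw
  have hV0 : 0 ≤ V := hV.nonneg fun i => mul_nonneg (hw i) (sq_nonneg _)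
  obtain ⟨C, -, hC, hsum⟩ := Real.inner_le_Lp_mul_Lq_hasSum_of_nonneg .two_two
    (f := fun i => √(w i)) (g := fun i => √(w i) * |x i|) (Real.sqrt_nonneg W) (Real.sqrt_nonneg V)
    (fun i => Real.sqrt_nonneg _) (fun i => by positivity)
    (by simpa [Real.rpow_two, Real.sq_sqrt, hw, hW0] using hW)
    (by simpa [Real.rpow_two, mul_pow, Real.sq_sqrt, hw, hV0] using hV)
  refine ⟨C, hC.trans_eq (Real.sqrt_mul hW0 V).symm, ?_⟩
  convert hsum using 2 with i
  rw [← mul_assoc, Real.mul_self_sqrt (hw i)]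

theorem exists_hasSum_pow_div_factorial_mul_abs_sub_le {x : ℝ} (hx : 0 ≤ x) (c : ℝ) :
    ∃ C ≤ Real.exp x * √((x - c) ^ 2 + x),
      HasSum (fun j : ℕ => x ^ j / j ! * |(j : ℝ) - c|) C := by
  obtain ⟨C, hC, hsum⟩ := exists_hasSum_mul_abs_le_sqrt (fun j => by positivity)
    (Real.hasSum_pow_div_factorial x)
    (by simpa only [mul_comm] using hasSum_sq_sub_mul_pow_div_factorial x c)
  refine ⟨C, hC.trans_eq ?_, hsum⟩
  rw [mul_comm _ (Real.exp x), ← mul_assoc, Real.sqrt_mul (by positivity),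
    Real.sqrt_mul_self (by positivity)]

theorem hasSum_exp_smul_sub_one {A : Type*} [NormedRing A] [NormedAlgebra ℝ A] [CompleteSpace A]
    (t : ℝ) (a : A) :
    HasSum (fun j : ℕ => (Real.exp (-t) * (t ^ j / j !)) • a ^ j) (exp (t • (a - 1))) := by
  have hsplit : t • (a - 1) = t • a + algebraMap ℝ A (-t) := by
    rw [smul_sub, Algebra.algebraMap_eq_smul_one, neg_smul, sub_eq_add_neg]
  have hball (b : A) : b ∈ Metric.eball (0 : A) (expSeries ℝ A).radius := by
    simp [expSeries_radius_eq_top]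
  rw [hsplit,
    exp_add_of_commute_of_mem_ball (𝕂 := ℝ) (Algebra.commutes _ _).symm (hball _) (hball _),
    ← algebraMap_exp_comm, ← Real.exp_eq_exp_ℝ, ← Algebra.commutes, ← Algebra.smul_def]
  convert (exp_series_hasSum_exp' (𝕂 := ℝ) (t • a)).const_smul (Real.exp (-t)) using 2 with j
  rw [smul_pow, smul_smul, smul_smul]
  ring_nf

section Operator

variable {𝕜 E : Type*} [NontriviallyNormedField 𝕜] [NormedAddCommGroup E] [NormedSpace 𝕜 E]

theorem pow_apply_sub_pow_apply_eq_sum (T : E →L[𝕜] E) (f : E) {j k : ℕ} (hkj : k ≤ j) :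
    (T ^ j) f - (T ^ k) f = ∑ i ∈ Ico k j, (T ^ i) ((T - 1) f) := by
  rw [← sum_Ico_sub (fun i => (T ^ i) f) hkj]
  refine sum_congr rfl fun i _ => ?_
  rw [pow_succ, mul_apply_eq_comp, sub_apply, one_apply_eq_self, map_sub]

/-- The exponent `j + k - 1` dominates every `i < max j k` and keeps the bound symmetric. -/
theorem norm_pow_apply_sub_pow_apply_le (T : E →L[𝕜] E) {M ρ : ℝ} (hM : 0 ≤ M) (hρ : 0 ≤ ρ)
    (hT : ∀ j : ℕ, ‖T ^ j‖ ≤ M * Real.exp (ρ * j)) (f : E) (j k : ℕ) :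
    ‖(T ^ j) f - (T ^ k) f‖ ≤ |(j : ℝ) - k| * (M * Real.exp (ρ * (j + k - 1))) * ‖(T - 1) f‖ := by
  wlog hkj : k ≤ j generalizing j k
  · rw [norm_sub_rev, abs_sub_comm, add_comm (j : ℝ)]
    exact this k j (le_of_not_ge hkj)
  have hterm : ∀ i ∈ Ico k j,
      ‖(T ^ i) ((T - 1) f)‖ ≤ M * Real.exp (ρ * (j + k - 1)) * ‖(T - 1) f‖ := by
    intro i hi
    have hij : (i : ℝ) ≤ j + k - 1 := by
      have : (i : ℝ) + 1 ≤ j := by exact_mod_cast (mem_Ico.mp hi).2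
      linarith [(Nat.cast_nonneg k : (0 : ℝ) ≤ k)]
    calc ‖(T ^ i) ((T - 1) f)‖ ≤ ‖T ^ i‖ * ‖(T - 1) f‖ := (T ^ i).le_opNorm _
      _ ≤ M * Real.exp (ρ * i) * ‖(T - 1) f‖ := by gcongr; exact hT i
      _ ≤ M * Real.exp (ρ * (j + k - 1)) * ‖(T - 1) f‖ := by gcongr
  calc ‖(T ^ j) f - (T ^ k) f‖
      ≤ ∑ i ∈ Ico k j, M * Real.exp (ρ * (j + k - 1)) * ‖(T - 1) f‖ := by
        rw [pow_apply_sub_pow_apply_eq_sum T f hkj]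
        exact norm_sum_le_of_le _ hterm
    _ = _ := by
        rw [sum_const, Nat.card_Ico, nsmul_eq_mul, Nat.cast_sub hkj,
          abs_of_nonneg (sub_nonneg.mpr (by exact_mod_cast hkj))]
        ring

end Operator

theorem norm_exp_smul_sub_one_apply_sub_pow_apply_le {B : Type*} [NormedAddCommGroup B]
    [NormedSpace ℝ B] [CompleteSpace B] (T : B →L[ℝ] B) {M ρ : ℝ} (hM : 0 ≤ M) (hρ : 0 ≤ ρ)
    (hT : ∀ j : ℕ, ‖T ^ j‖ ≤ M * Real.exp (ρ * j)) (k : ℕ) (f : B) :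
    ‖exp ((k : ℝ) • (T - 1)) f - (T ^ k) f‖ ≤
      M * Real.exp (ρ * (k - 1)) * Real.exp (k * (Real.exp ρ - 1)) *
        √(k ^ 2 * (Real.exp ρ - 1) ^ 2 + k * Real.exp ρ) * ‖(T - 1) f‖ := by
  set w : ℕ → ℝ := fun j => Real.exp (-k) * (k ^ j / j !)
  have hw : HasSum w 1 := by
    simpa [← Real.exp_add] using (Real.hasSum_pow_div_factorial k).mul_left (Real.exp (-k))
  have hexp : HasSum (fun j => w j • (T ^ j) f) (exp ((k : ℝ) • (T - 1)) f) :=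
    (hasSum_exp_smul_sub_one (k : ℝ) T).mapL (ContinuousLinearMap.apply ℝ B f)
  have hdiff : HasSum (fun j => w j • ((T ^ j) f - (T ^ k) f))
      (exp ((k : ℝ) • (T - 1)) f - (T ^ k) f) := by
    simpa only [smul_sub, one_smul] using hexp.sub (hw.smul_const ((T ^ k) f))
  obtain ⟨C, hC, hsum⟩ :=
    exists_hasSum_pow_div_factorial_mul_abs_sub_le (x := k * Real.exp ρ) (by positivity) k
  set K := M * Real.exp (ρ * (k - 1)) * Real.exp (-k) * ‖(T - 1) f‖
  have hbound : ∀ j, ‖w j • ((T ^ j) f - (T ^ k) f)‖ ≤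
      K * ((k * Real.exp ρ) ^ j / j ! * |(j : ℝ) - k|) := by
    intro j
    rw [norm_smul, Real.norm_of_nonneg (by positivity)]
    calc w j * ‖(T ^ j) f - (T ^ k) f‖
        ≤ w j * (|(j : ℝ) - k| * (M * Real.exp (ρ * (j + k - 1))) * ‖(T - 1) f‖) := by
          gcongr; exact norm_pow_apply_sub_pow_apply_le T hM hρ hT f j k
      _ = K * ((k * Real.exp ρ) ^ j / j ! * |(j : ℝ) - k|) := by
          rw [show ρ * (j + k - 1) = ρ * (k - 1) + j * ρ by ring, Real.exp_add, Real.exp_nat_mul]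
          ring
  calc ‖exp ((k : ℝ) • (T - 1)) f - (T ^ k) f‖ ≤ K * C :=
        hdiff.norm_le_of_bounded (hsum.mul_left K) hbound
    _ ≤ K * (Real.exp (k * Real.exp ρ) * √((k * Real.exp ρ - k) ^ 2 + k * Real.exp ρ)) := by
        gcongr
    _ = _ := by
        rw [show (k * Real.exp ρ - k) ^ 2 = (k : ℝ) ^ 2 * (Real.exp ρ - 1) ^ 2 by ring,
          show k * (Real.exp ρ - 1) = -k + k * Real.exp ρ by ring, Real.exp_add]
        ring

theorem chernoff_type_estimate_general
    (B : Type*) [NormedAddCommGroup B] [NormedSpace ℝ B] [CompleteSpace B]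
    (T : B →L[ℝ] B) (M ω : ℝ) (hM : 1 ≤ M) (hω : 0 ≤ ω) (n : ℕ)
    (hT : ∀ j : ℕ, ‖T ^ j‖ ≤ M * Real.exp (ω * j / n)) (k : ℕ) :
    ∀ f : B,
      ‖NormedSpace.exp ((k : ℝ) • (T - 1)) f - (T ^ k) f‖ ≤
        M * Real.exp (ω * ((k : ℝ) - 1) / n) * Real.exp ((k : ℝ) * (Real.exp (ω / n) - 1)) *
          Real.sqrt ((k : ℝ) ^ 2 * (Real.exp (ω / n) - 1) ^ 2 + (k : ℝ) * Real.exp (ω / n)) *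
          ‖(T - 1) f‖ := by
  intro f
  simp only [mul_div_right_comm ω] at hT ⊢
  exact norm_exp_smul_sub_one_apply_sub_pow_apply_le T (by linarith) (by positivity) hT k f

theorem chernoff_type_estimate
    (B : Type*) [NormedAddCommGroup B] [NormedSpace ℝ B] [CompleteSpace B]
    (T : B →L[ℝ] B) (M ω : ℝ) (hM : 1 ≤ M) (hω : 0 ≤ ω) (n : ℕ) (hn : 0 < n)
    (hT : ∀ j : ℕ, ‖T ^ j‖ ≤ M * Real.exp (ω * j / n)) (k : ℕ) :
    ∀ f : B,
      ‖NormedSpace.exp ((k : ℝ) • (T - 1)) f - (T ^ k) f‖ ≤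
        M * Real.exp (ω * ((k : ℝ) - 1) / n) * Real.exp ((k : ℝ) * (Real.exp (ω / n) - 1)) *
          Real.sqrt ((k : ℝ) ^ 2 * (Real.exp (ω / n) - 1) ^ 2 + (k : ℝ) * Real.exp (ω / n)) *
          ‖(T - 1) f‖ :=
  chernoff_type_estimate_general B T M ω hM hω n hT k
end

section
/- Let T be a contraction (‖T‖ ≤ 1) on a Banach space B. Then for every f ∈ B and k ∈ ℕ, ‖e^{k(T−I)} f − T^k f‖ ≤ √k · ‖(T−I) f‖. -/
/-!
Writing `exp (k (T - 1)) = ∑ₙ pₖ(n) Tⁿ` with the Poisson weights `pₖ(n) = e⁻ᵏ kⁿ / n!`, the vector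
`exp (k (T - 1)) f - Tᵏ f` is the `pₖ`-average of `Tⁿ f - Tᵏ f`. Telescoping with the contraction
`T` bounds `‖Tⁿ f - Tᵏ f‖` by `|n - k| ‖(T - 1) f‖`, and the mean absolute deviation of the
Poisson distribution is at most its standard deviation `√k`.
-/

open scoped Nat

noncomputable def poissonWeight (r : ℝ) (n : ℕ) : ℝ := Real.exp (-r) * r ^ n / n !

lemma poissonWeight_nonneg {r : ℝ} (hr : 0 ≤ r) (n : ℕ) : 0 ≤ poissonWeight r n := by
  unfold poissonWeight
  positivity

lemma hasSum_poissonWeight (r : ℝ) : HasSum (poissonWeight r) 1 := by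
  unfold poissonWeight
  have h := (NormedSpace.expSeries_div_hasSum_exp r).mul_left (Real.exp (-r))
  rw [← Real.exp_eq_exp_ℝ, ← Real.exp_add, neg_add_cancel, Real.exp_zero] at h
  simpa only [mul_div_assoc] using h

lemma succ_mul_poissonWeight_succ (r : ℝ) (n : ℕ) :
    (n + 1) * poissonWeight r (n + 1) = r * poissonWeight r n := by
  simp only [poissonWeight, Nat.factorial_succ, Nat.cast_mul, Nat.cast_succ, pow_succ]
  field_simp

lemma hasSum_mul_poissonWeight (r : ℝ) : HasSum (fun n : ℕ ↦ n * poissonWeight r n) r := by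
  rw [← hasSum_nat_add_iff' 1]
  simpa [succ_mul_poissonWeight_succ] using (hasSum_poissonWeight r).mul_left r

lemma hasSum_mul_sub_one_mul_poissonWeight (r : ℝ) :
    HasSum (fun n : ℕ ↦ n * (n - 1) * poissonWeight r n) (r ^ 2) := by
  rw [← hasSum_nat_add_iff' 1]
  simp only [Finset.sum_range_one, CharP.cast_eq_zero, zero_mul, sub_zero, sq]
  refine ((hasSum_mul_poissonWeight r).mul_left r).congr_fun fun n ↦ ?_
  rw [Nat.cast_succ, add_sub_cancel_right, mul_right_comm, succ_mul_poissonWeight_succ]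
  ring

lemma hasSum_sub_sq_mul_poissonWeight (r : ℝ) :
    HasSum (fun n : ℕ ↦ (n - r) ^ 2 * poissonWeight r n) r := by
  convert ((hasSum_mul_sub_one_mul_poissonWeight r).add
    ((hasSum_mul_poissonWeight r).mul_left (1 - 2 * r))).add
    ((hasSum_poissonWeight r).mul_left (r ^ 2)) using 1
  · ext n; ring
  · ring

lemma summable_abs_sub_mul_poissonWeight {r : ℝ} (hr : 0 ≤ r) :
    Summable (fun n : ℕ ↦ |n - r| * poissonWeight r n) := by
  refine Summable.of_nonneg_of_le (fun n ↦ mul_nonneg (abs_nonneg _) (poissonWeight_nonneg hr n))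
    (fun n ↦ ?_) ((hasSum_sub_sq_mul_poissonWeight r).add (hasSum_poissonWeight r)).summable
  have h := two_mul_le_add_sq |(n : ℝ) - r| 1
  rw [sq_abs] at h
  nlinarith [poissonWeight_nonneg hr n, abs_nonneg ((n : ℝ) - r)]

lemma tsum_abs_sub_mul_poissonWeight_le {r : ℝ} (hr : 0 ≤ r) :
    ∑' n : ℕ, |n - r| * poissonWeight r n ≤ √r := by
  rcases hr.eq_or_lt with rfl | hr'
  · have hzero (n : ℕ) : (n : ℝ) * poissonWeight 0 n = 0 := by
      cases n <;> simp [poissonWeight]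
    simp [hzero]
  have hs : 0 < √r := Real.sqrt_pos.mpr hr'
  -- AM-GM: `2 √r |x| ≤ x² + r`, and both `∑ (n - r)² p(n)` and `∑ r p(n)` equal `r`.
  have hbound : HasSum (fun n : ℕ ↦
      ((n - r) ^ 2 * poissonWeight r n + r * poissonWeight r n) / (2 * √r)) √r := by
    have h := ((hasSum_sub_sq_mul_poissonWeight r).add
      ((hasSum_poissonWeight r).mul_left r)).div_const (2 * √r)
    rwa [mul_one, ← two_mul, mul_div_mul_left _ _ two_ne_zero, Real.div_sqrt] at h
  refine hasSum_le (fun n ↦ ?_) (summable_abs_sub_mul_poissonWeight hr).hasSum hbound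
  rw [le_div_iff₀ (mul_pos two_pos hs)]
  have h := two_mul_le_add_sq |(n : ℝ) - r| √r
  rw [sq_abs, Real.sq_sqrt hr] at h
  nlinarith [poissonWeight_nonneg hr n]

lemma hasSum_poissonWeight_smul_pow {A : Type*} [NormedRing A] [NormedAlgebra ℝ A]
    [CompleteSpace A] (r : ℝ) (a : A) :
    HasSum (fun n ↦ poissonWeight r n • a ^ n) (NormedSpace.exp (r • (a - 1))) := by
  let +nondep : NormedAlgebra ℚ A := .restrictScalars ℚ ℝ A
  have hsplit : NormedSpace.exp (r • (a - 1)) = Real.exp (-r) • NormedSpace.exp (r • a) := by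
    rw [smul_sub, sub_eq_neg_add, ← neg_smul, NormedSpace.exp_add_of_commute
      ((Commute.one_left a).smul_left _ |>.smul_right _), ← Algebra.algebraMap_eq_smul_one,
      ← NormedSpace.algebraMap_exp_comm, Real.exp_eq_exp_ℝ, ← Algebra.smul_def]
  rw [hsplit]
  refine ((NormedSpace.exp_series_hasSum_exp' (𝕂 := ℝ) (r • a)).const_smul
    (Real.exp (-r))).congr_fun fun n ↦ ?_
  rw [smul_pow, smul_smul, smul_smul, poissonWeight]
  congr 1
  ring

section Contraction

variable {𝕜 E : Type*} [NontriviallyNormedField 𝕜] [SeminormedAddCommGroup E] [NormedSpace 𝕜 E]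
  {T : E →L[𝕜] E}

lemma norm_pow_apply_le_of_norm_le_one (hT : ‖T‖ ≤ 1) (n : ℕ) (x : E) : ‖(T ^ n) x‖ ≤ ‖x‖ := by
  induction n with
  | zero => simp
  | succ n ih =>
    rw [pow_succ', mul_apply_eq_comp]
    exact (T.le_of_opNorm_le hT _).trans (by rw [one_mul]; exact ih)

lemma norm_pow_apply_sub_pow_apply_le_s14 (hT : ‖T‖ ≤ 1) (m n : ℕ) (x : E) :
    ‖(T ^ m) x - (T ^ n) x‖ ≤ |(m : ℝ) - n| * ‖(T - 1) x‖ := by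
  wlog hnm : n ≤ m generalizing m n
  · rw [norm_sub_rev, abs_sub_comm]
    exact this n m (le_of_not_ge hnm)
  rw [abs_of_nonneg (sub_nonneg.mpr (Nat.cast_le.mpr hnm))]
  induction m, hnm using Nat.le_induction with
  | base => simp
  | succ m hnm ih =>
    have hstep : (T ^ (m + 1)) x - (T ^ n) x =
        (T ^ m) ((T - 1) x) + ((T ^ m) x - (T ^ n) x) := by
      rw [pow_succ, mul_apply_eq_comp, sub_apply, map_sub, one_apply_eq_self]
      abel
    calc ‖(T ^ (m + 1)) x - (T ^ n) x‖
        ≤ ‖(T - 1) x‖ + (m - n) * ‖(T - 1) x‖ := by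
          rw [hstep]
          exact (norm_add_le _ _).trans
            (add_le_add (norm_pow_apply_le_of_norm_le_one hT m _) ih)
      _ = ((m + 1 : ℕ) - n) * ‖(T - 1) x‖ := by push_cast; ring

end Contraction

theorem chernoff_sqrt_lemma
    (B : Type*) [NormedAddCommGroup B] [NormedSpace ℝ B] [CompleteSpace B]
    (T : B →L[ℝ] B) (hT : ‖T‖ ≤ 1) :
    ∀ (f : B) (k : ℕ),
      ‖NormedSpace.exp ((k : ℝ) • (T - 1)) f - (T ^ k) f‖ ≤ Real.sqrt k * ‖(T - 1) f‖ := by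
  intro f k
  have hk : (0 : ℝ) ≤ k := k.cast_nonneg
  have hexp : HasSum (fun n ↦ poissonWeight k n • ((T ^ n) f - (T ^ k) f))
      (NormedSpace.exp ((k : ℝ) • (T - 1)) f - (T ^ k) f) := by
    simpa only [ContinuousLinearMap.apply_apply, smul_apply, smul_sub, one_smul] using
      ((hasSum_poissonWeight_smul_pow k T).mapL (ContinuousLinearMap.apply ℝ B f)).sub
        ((hasSum_poissonWeight k).smul_const ((T ^ k) f))
  have hbound (n : ℕ) : ‖poissonWeight k n • ((T ^ n) f - (T ^ k) f)‖
      ≤ |(n : ℝ) - k| * poissonWeight k n * ‖(T - 1) f‖ := by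
    rw [norm_smul, Real.norm_of_nonneg (poissonWeight_nonneg hk n), mul_comm, mul_right_comm]
    exact mul_le_mul_of_nonneg_right (norm_pow_apply_sub_pow_apply_le_s14 hT n k f)
      (poissonWeight_nonneg hk n)
  calc ‖NormedSpace.exp ((k : ℝ) • (T - 1)) f - (T ^ k) f‖
      ≤ (∑' n : ℕ, |(n : ℝ) - k| * poissonWeight k n) * ‖(T - 1) f‖ :=
        hexp.norm_le_of_bounded ((summable_abs_sub_mul_poissonWeight hk).hasSum.mul_right _) hbound
    _ ≤ √k * ‖(T - 1) f‖ := by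
        gcongr
        exact tsum_abs_sub_mul_poissonWeight_le hk
end
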